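/- arXiv:2206.06946 — 2 statements merged into one kernel-verified Lean document; each statement's English description precedes it below -/
import Mathlib

section
/- In the Poincaré model, if x = Ψ(u,v) and x' = Ψ(u',v') in Ĥ^{2,n} are joined by a spacelike geodesic, then their pseudo-distance satisfies d_{Ĥ^{2,n}}(x,x') ≤ d_{ℍ²}(u,u'), where d_{ℍ²} is the hyperbolic distance on 𝔻² induced by the metric (2/(1-‖u‖²))²|du|², with equality if and only if v = v'. -/
/-- The signature `(2, n+1)` bilinear form on `ℝ^{n+3}`. -/
noncomputable def bform (n : ℕ) (x y : Fin (n + 3) → ℝ) : ℝ :=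
  ∑ i : Fin (n + 3), (if (i : ℕ) < 2 then (1 : ℝ) else -1) * (x i * y i)

/-- The Poincaré model map `Ψ(u,v) = (2/(1-‖u‖²))u + ((1+‖u‖²)/(1-‖u‖²))v`. -/
lemma bform_symm (n : ℕ) (x y : Fin (n+3) → ℝ) : bform n x y = bform n y x :=
  Finset.sum_congr rfl fun i _ => by ring

lemma bform_add_left (n : ℕ) (x y z : Fin (n+3) → ℝ) :
    bform n (x + y) z = bform n x z + bform n y z := by
  unfold bform
  rw [← Finset.sum_add_distrib]
  exact Finset.sum_congr rfl fun i _ => by simp only [Pi.add_apply]; split <;> ring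

lemma bform_smul_left (n : ℕ) (c : ℝ) (x z : Fin (n+3) → ℝ) :
    bform n (c • x) z = c * bform n x z := by
  unfold bform
  rw [Finset.mul_sum]
  exact Finset.sum_congr rfl fun i _ => by simp [Pi.smul_apply, smul_eq_mul]; ring

lemma bform_add_right (n : ℕ) (x y z : Fin (n+3) → ℝ) :
    bform n x (y + z) = bform n x y + bform n x z := by
  rw [bform_symm, bform_add_left, bform_symm n y x, bform_symm n z x]

lemma bform_smul_right (n : ℕ) (c : ℝ) (x z : Fin (n+3) → ℝ) :
    bform n x (c • z) = c * bform n x z := by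
  rw [bform_symm, bform_smul_left, bform_symm]

lemma bform_comb (n : ℕ) (a₁ a₂ b₁ b₂ : ℝ) (x₁ x₂ y₁ y₂ : Fin (n+3) → ℝ) :
    bform n (a₁ • x₁ + a₂ • x₂) (b₁ • y₁ + b₂ • y₂) =
      a₁*b₁*bform n x₁ y₁ + a₁*b₂*bform n x₁ y₂ + a₂*b₁*bform n x₂ y₁ + a₂*b₂*bform n x₂ y₂ := by
  simp only [bform_add_left, bform_add_right, bform_smul_left, bform_smul_right]
  ring

lemma bform_zero_left (n : ℕ) (z : Fin (n+3) → ℝ) : bform n 0 z = 0 := by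
  unfold bform; simp

lemma bform_nonneg_of_mem (n : ℕ) (E : Submodule ℝ (Fin (n + 3) → ℝ))
    (hEpos : ∀ u ∈ E, u ≠ 0 → 0 < bform n u u) {x : Fin (n+3) → ℝ} (hx : x ∈ E) :
    0 ≤ bform n x x := by
  rcases eq_or_ne x 0 with h | h
  · rw [h, bform_zero_left]
  · exact (hEpos x hx h).le

lemma orth_nonneg_zero (n : ℕ) (E : Submodule ℝ (Fin (n + 3) → ℝ))
    (hE2 : Module.finrank ℝ E = 2)
    (hEpos : ∀ u ∈ E, u ≠ 0 → 0 < bform n u u)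
    (w : Fin (n+3) → ℝ) (hw : ∀ x ∈ E, bform n x w = 0)
    (hww : 0 ≤ bform n w w) : w = 0 := by
  let φ : (E × ℝ) →ₗ[ℝ] (ℝ × ℝ) :=
  { toFun := fun p => ((p.1 : Fin (n+3) → ℝ) 0 + p.2 * w 0, (p.1 : Fin (n+3) → ℝ) 1 + p.2 * w 1)
    map_add' := fun p q => by
      simp only [Submodule.coe_add, Pi.add_apply, Prod.fst_add, Prod.snd_add, Prod.mk_add_mk,
        Prod.mk.injEq]
      constructor <;> ring
    map_smul' := fun c p => by
      simp only [Submodule.coe_smul, Pi.smul_apply, smul_eq_mul, Prod.smul_fst, Prod.smul_snd,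
        Prod.smul_mk, RingHom.id_apply, Prod.mk.injEq]
      constructor <;> ring }
  have hker : LinearMap.ker φ ≠ ⊥ := by
    apply LinearMap.ker_ne_bot_of_finrank_lt
    rw [Module.finrank_prod, Module.finrank_prod, hE2, Module.finrank_self]
    norm_num
  obtain ⟨p, hp, hp0⟩ := Submodule.ne_bot_iff _ |>.1 hker
  set x : Fin (n+3) → ℝ := (p.1 : Fin (n+3) → ℝ) with hxdef
  set s : ℝ := p.2 with hsdef
  set z : Fin (n+3) → ℝ := x + s • w with hzdef
  have hφ : φ p = 0 := hp
  have hz0 : z 0 = 0 := by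
    have := congrArg Prod.fst hφ
    simpa [φ, hzdef, Pi.add_apply, Pi.smul_apply, smul_eq_mul] using this
  have hz1 : z 1 = 0 := by
    have := congrArg Prod.snd hφ
    simpa [φ, hzdef, Pi.add_apply, Pi.smul_apply, smul_eq_mul] using this
  have hterm : ∀ i : Fin (n+3), (if (i : ℕ) < 2 then (1:ℝ) else -1) * (z i * z i) ≤ 0 := by
    intro i
    by_cases h : (i : ℕ) < 2
    · have : z i = 0 := by
        interval_cases hi : (i : ℕ)
        · have : i = 0 := Fin.ext (by simpa using hi)
          rw [this]; exact hz0
        · have : i = 1 := Fin.ext (by simpa using hi)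
          rw [this]; exact hz1
      simp [h, this]
    · simp only [h, if_false]
      nlinarith [mul_self_nonneg (z i)]
  have hle : bform n z z ≤ 0 := Finset.sum_nonpos fun i _ => hterm i
  have hexp : bform n z z = bform n x x + (s*s) * bform n w w := by
    simp only [hzdef, bform_add_left, bform_add_right, bform_smul_left, bform_smul_right]
    rw [hw x p.1.2, bform_symm n w x, hw x p.1.2]
    ring
  have hxx : 0 ≤ bform n x x := bform_nonneg_of_mem n E hEpos p.1.2
  have hsww : 0 ≤ (s*s) * bform n w w := mul_nonneg (mul_self_nonneg s) hww
  have hzz : bform n z z = 0 := le_antisymm hle (hexp ▸ by linarith)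
  -- all components of z vanish
  have hzcomp : ∀ i : Fin (n+3), z i = 0 := by
    have := (Finset.sum_eq_zero_iff_of_nonpos (fun i _ => hterm i)).1 hzz
    intro i
    have hi := this i (Finset.mem_univ i)
    by_cases h : (i : ℕ) < 2
    · interval_cases hi2 : (i : ℕ)
      · have : i = 0 := Fin.ext (by simpa using hi2)
        rw [this]; exact hz0
      · have : i = 1 := Fin.ext (by simpa using hi2)
        rw [this]; exact hz1
    · simp only [h, if_false] at hi
      nlinarith [mul_self_nonneg (z i)]
  have hzzero : z = 0 := funext hzcomp
  have hxx0 : bform n x x = 0 := by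
    have := hexp ▸ hzz; linarith
  have hx0 : x = 0 := by
    by_contra h
    exact absurd hxx0 (ne_of_gt (hEpos x p.1.2 h))
  have hs0 : s ≠ 0 := by
    intro h
    apply hp0
    have h1 : p.1 = 0 := Subtype.ext hx0
    exact Prod.ext h1 h
  have : s • w = 0 := by
    have := hzzero; rw [hzdef, hx0, zero_add] at this; exact this
  rcases smul_eq_zero.1 this with h | h
  · exact absurd h hs0
  · exact h


noncomputable def Psi (n : ℕ) (p : (Fin (n + 3) → ℝ) × (Fin (n + 3) → ℝ)) :
    Fin (n + 3) → ℝ :=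
  (2 / (1 - bform n p.1 p.1)) • p.1 + ((1 + bform n p.1 p.1) / (1 - bform n p.1 p.1)) • p.2

/-- `x` and `y` are joined by a spacelike geodesic of `Ĥ^{2,n}`. -/
def JoinedSpacelike (n : ℕ) (x y : Fin (n + 3) → ℝ) : Prop :=
  ∃ v : Fin (n + 3) → ℝ, bform n v v = 1 ∧ bform n x v = 0 ∧
    ∃ t : ℝ, y = Real.cosh t • x + Real.sinh t • v

/-- `cosh` of the hyperbolic distance on `𝔻²` (for the metric `(2/(1-‖u‖²))²|du|²`):
`cosh (d(u,u')) = -(2/(1-‖u‖²))(2/(1-‖u'‖²))⟨u,u'⟩ + ((1+‖u‖²)/(1-‖u‖²))((1+‖u'‖²)/(1-‖u'‖²))`. -/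
noncomputable def coshHypDist (n : ℕ) (u u' : Fin (n + 3) → ℝ) : ℝ :=
  -((2 / (1 - bform n u u)) * (2 / (1 - bform n u' u')) * bform n u u') +
    ((1 + bform n u u) / (1 - bform n u u)) * ((1 + bform n u' u') / (1 - bform n u' u'))

lemma vv'_eq_of_bform_eq_neg_one (n : ℕ) (E : Submodule ℝ (Fin (n + 3) → ℝ))
    (hE2 : Module.finrank ℝ E = 2)
    (hEpos : ∀ u ∈ E, u ≠ 0 → 0 < bform n u u)
    (v v' : Fin (n + 3) → ℝ)
    (hv : ∀ w ∈ E, bform n w v = 0) (hv1 : bform n v v = -1)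
    (hv' : ∀ w ∈ E, bform n w v' = 0) (hv'1 : bform n v' v' = -1)
    (hb : bform n v v' = -1) : v = v' := by
  have hworth : ∀ x ∈ E, bform n x (v + ((-1 : ℝ)) • v') = 0 := fun x hx => by
    rw [bform_add_right, bform_smul_right, hv x hx, hv' x hx]; ring
  have hcomp : bform n (v + ((-1 : ℝ)) • v') (v + ((-1 : ℝ)) • v') = 0 := by
    simp only [bform_add_left, bform_add_right, bform_smul_left, bform_smul_right]
    rw [hv1, hv'1, hb, bform_symm n v' v, hb]; ring
  have h0 := orth_nonneg_zero n E hE2 hEpos _ hworth hcomp.ge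
  have : v = -(((-1 : ℝ)) • v') := eq_neg_of_add_eq_zero_left h0
  simpa using this

lemma bform_vv'_ge (n : ℕ) (E : Submodule ℝ (Fin (n + 3) → ℝ))
    (hE2 : Module.finrank ℝ E = 2)
    (hEpos : ∀ u ∈ E, u ≠ 0 → 0 < bform n u u)
    (v v' : Fin (n + 3) → ℝ)
    (hv : ∀ w ∈ E, bform n w v = 0) (hv1 : bform n v v = -1)
    (hv' : ∀ w ∈ E, bform n w v' = 0) (hv'1 : bform n v' v' = -1) :
    -1 ≤ bform n v v' := by
  by_contra hlt
  push_neg at hlt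
  set b := bform n v v' with hbdef
  have hworth : ∀ x ∈ E, bform n x (v + b • v') = 0 := fun x hx => by
    rw [bform_add_right, bform_smul_right, hv x hx, hv' x hx]; ring
  have hcomp : bform n (v + b • v') (v + b • v') = b * b - 1 := by
    simp only [bform_add_left, bform_add_right, bform_smul_left, bform_smul_right]
    rw [hv1, hv'1, ← hbdef, bform_symm n v' v, ← hbdef]; ring
  have hge : 0 ≤ bform n (v + b • v') (v + b • v') := by rw [hcomp]; nlinarith
  have h0 := orth_nonneg_zero n E hE2 hEpos _ hworth hge
  have hveq : v = (-b) • v' := by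
    have : v = -(b • v') := eq_neg_of_add_eq_zero_left h0
    rw [this, neg_smul]
  have : bform n v v = (b * b) * bform n v' v' := by
    rw [hveq, bform_smul_left, bform_smul_right]; ring
  rw [hv1, hv'1] at this
  nlinarith


/-- In the Poincaré model of a positive definite 2-plane `E`, if `x = Ψ(u,v)` and
`x' = Ψ(u',v')` are joined by a spacelike geodesic, then the pseudo-distance `d` of `x, x'`
(characterized by `d ≥ 0`, `cosh d = -⟨x,x'⟩`) and the hyperbolic distance `d₂` of `u, u'`
(characterized by `d₂ ≥ 0`, `cosh d₂ = coshHypDist u u'`) satisfy `d ≤ d₂`, with equality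
if and only if `v = v'`. -/
theorem stmt5 (n : ℕ) (E : Submodule ℝ (Fin (n + 3) → ℝ))
    (hE2 : Module.finrank ℝ E = 2)
    (hEpos : ∀ u ∈ E, u ≠ 0 → 0 < bform n u u)
    (u v u' v' : Fin (n + 3) → ℝ)
    (hu : u ∈ E) (hu1 : bform n u u < 1)
    (hv : ∀ w ∈ E, bform n w v = 0) (hv1 : bform n v v = -1)
    (hu' : u' ∈ E) (hu'1 : bform n u' u' < 1)
    (hv' : ∀ w ∈ E, bform n w v' = 0) (hv'1 : bform n v' v' = -1)
    (hsp : JoinedSpacelike n (Psi n (u, v)) (Psi n (u', v')))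
    (d d₂ : ℝ) (hd0 : 0 ≤ d) (hd20 : 0 ≤ d₂)
    (hd : Real.cosh d = -(bform n (Psi n (u, v)) (Psi n (u', v'))))
    (hd2 : Real.cosh d₂ = coshHypDist n u u') :

    d ≤ d₂ ∧ (d = d₂ ↔ v = v') := by
  have h1a : (0:ℝ) < 1 - bform n u u :=
    sub_pos.2 hu1
  have h1a' : (0:ℝ) < 1 - bform n u' u' := sub_pos.2 hu'1
  have ha0 : 0 ≤ bform n u u := bform_nonneg_of_mem n E hEpos hu
  have ha'0 : 0 ≤ bform n u' u' := bform_nonneg_of_mem n E hEpos hu'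
  have hγ : 0 < (1 + bform n u u) / (1 - bform n u u) := div_pos (by linarith) h1a
  have hγ' : 0 < (1 + bform n u' u') / (1 - bform n u' u') := div_pos (by linarith) h1a'
  have huv' : bform n u v' = 0 := hv' u hu
  have hvu' : bform n v u' = 0 := by rw [bform_symm]; exact hv u' hu'
  have hB : bform n (Psi n (u, v)) (Psi n (u', v')) =
      (2 / (1 - bform n u u)) * (2 / (1 - bform n u' u')) * bform n u u' +
      ((1 + bform n u u) / (1 - bform n u u)) * ((1 + bform n u' u') / (1 - bform n u' u')) *
        bform n v v' := by
    show bform n ((2 / (1 - bform n u u)) • u + ((1 + bform n u u) / (1 - bform n u u)) • v)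
        ((2 / (1 - bform n u' u')) • u' +
          ((1 + bform n u' u') / (1 - bform n u' u')) • v') = _
    rw [bform_comb, huv', hvu']
    ring
  have key : Real.cosh d₂ - Real.cosh d =
      ((1 + bform n u u) / (1 - bform n u u)) * ((1 + bform n u' u') / (1 - bform n u' u')) *
        (1 + bform n v v') := by
    rw [hd, hd2, hB]
    unfold coshHypDist
    ring
  have hγγ : 0 < ((1 + bform n u u) / (1 - bform n u u)) *
      ((1 + bform n u' u') / (1 - bform n u' u')) := mul_pos hγ hγ'
  have hbge : -1 ≤ bform n v v' := bform_vv'_ge n E hE2 hEpos v v' hv hv1 hv' hv'1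
  have hcle : Real.cosh d ≤ Real.cosh d₂ := by nlinarith
  have hdle : d ≤ d₂ := by
    have h := Real.cosh_le_cosh.1 hcle
    rwa [abs_of_nonneg hd0, abs_of_nonneg hd20] at h
  refine ⟨hdle, ?_, ?_⟩
  · intro hdd
    have h0 : ((1 + bform n u u) / (1 - bform n u u)) *
        ((1 + bform n u' u') / (1 - bform n u' u')) * (1 + bform n v v') = 0 := by
      rw [← key, hdd]; ring
    have hb : bform n v v' = -1 := by
      rcases mul_eq_zero.1 h0 with h | h
      · exact absurd h hγγ.ne'
      · linarith
    exact vv'_eq_of_bform_eq_neg_one n E hE2 hEpos v v' hv hv1 hv' hv'1 hb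
  · intro hvv
    subst hvv
    have hb : bform n v v = -1 := hv1
    have hceq : Real.cosh d = Real.cosh d₂ := by rw [hb] at key; linarith
    have h1 := Real.cosh_le_cosh.1 hceq.ge
    rw [abs_of_nonneg hd0, abs_of_nonneg hd20] at h1
    linarith
end

section
/- Let E be a positive-definite 2-plane in ℝ^{2,n+1} and π_E the orthogonal projection onto E. Then for every photon (isotropic 2-plane) F of ℝ^{2,n+1}, the restriction π_E|_F : F → E is a linear isomorphism; consequently F is the graph of a unique linear map t_F : E → E^⊥ which is an isometric embedding of (E, ⟨·,·⟩|_E) into (E^⊥, −⟨·,·⟩|_{E^⊥}). -/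
open LinearMap (BilinForm)
open Module

namespace Submodule

variable {R V : Type*} [Ring R] [AddCommGroup V] [Module R V] {E F Q : Submodule R V}

theorem existsUnique_mem_sub_mem_of_isCompl (h : IsCompl F Q) (y : V) :
    ∃! x, x ∈ F ∧ y - x ∈ Q := by
  refine ⟨F.projection Q h y, ⟨projection_apply_mem h y, sub_projection_mem h y⟩, ?_⟩
  rintro x ⟨hxF, hxQ⟩
  have hQ : x - F.projection Q h y ∈ Q := by
    simpa using Q.sub_mem (sub_projection_mem h y) hxQ
  exact sub_eq_zero.mp <| (disjoint_def.mp h.disjoint) _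
    (F.sub_mem hxF (projection_apply_mem h y)) hQ

theorem existsUnique_graph_of_isCompl (hE : IsCompl E Q) (hF : IsCompl F Q) :
    ∃! T : E →ₗ[R] V, (∀ e : E, T e ∈ Q) ∧ (F : Set V) = {x | ∃ e : E, x = e + T e} := by
  set T : E →ₗ[R] V := -(Q.projection F hF.symm ∘ₗ E.subtype)
  have hTQ (e : E) : T e ∈ Q := Q.neg_mem (projection_apply_mem hF.symm e)
  have hTF (e : E) : (e : V) + T e ∈ F := by
    simpa [T, ← sub_eq_add_neg] using sub_projection_mem hF.symm e
  have hF_unique (e : E) {x : V} (hxF : x ∈ F) (hxQ : (e : V) - x ∈ Q) : x = e + T e :=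
    (existsUnique_mem_sub_mem_of_isCompl hF e).unique ⟨hxF, hxQ⟩ ⟨hTF e, by simpa using hTQ e⟩
  refine ⟨T, ⟨hTQ, ?_⟩, ?_⟩
  · ext x
    refine ⟨fun hxF => ?_, fun ⟨e, hx⟩ => hx ▸ hTF e⟩
    obtain ⟨e, t, hx, -⟩ := existsUnique_add_of_isCompl hE x
    exact ⟨e, hF_unique e hxF (by simp [← hx])⟩
  · rintro T' ⟨hT'Q, hT'F⟩
    ext e
    have hmem : (e : V) + T' e ∈ F := by rw [← SetLike.mem_coe, hT'F]; exact ⟨e, rfl⟩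
    simpa using hF_unique e hmem (by simpa using hT'Q e)

end Submodule

theorem IsCompl.isCompl_of_finrank_eq {K V : Type*} [DivisionRing K] [AddCommGroup V] [Module K V]
    [FiniteDimensional K V] {E F Q : Submodule K V} (hE : IsCompl E Q)
    (hdim : finrank K F = finrank K E) (hdisj : Disjoint F Q) : IsCompl F Q :=
  (Submodule.isCompl_iff_disjoint F Q
    (by rw [hdim, Submodule.finrank_add_eq_of_isCompl hE])).mpr hdisj

namespace LinearMap.BilinForm

variable {R V : Type*} [CommRing R] [AddCommGroup V] [Module R V] {B : BilinForm R V}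
  {E F : Submodule R V}

theorem IsRefl.mem_orthogonal_iff_left (hB : B.IsRefl) {v : V} :
    v ∈ B.orthogonal E ↔ ∀ e ∈ E, B v e = 0 :=
  forall₂_congr fun _ _ => ⟨hB _ _, hB _ _⟩

theorem IsRefl.apply_eq_neg_of_apply_add_eq_zero (hB : B.IsRefl) {e e' t t' : V}
    (he : e ∈ E) (he' : e' ∈ E) (ht : t ∈ B.orthogonal E) (ht' : t' ∈ B.orthogonal E)
    (h : B (e + t) (e' + t') = 0) : B t t' = -B e e' := by
  have het' : B e t' = 0 := ht' e he
  have hte' : B t e' = 0 := hB _ _ (ht e' he')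
  simp only [map_add, LinearMap.add_apply, het', hte'] at h
  linear_combination h

theorem existsUnique_isometry_graph_of_isCompl (hB : B.IsRefl)
    (hE : IsCompl E (B.orthogonal E)) (hF : IsCompl F (B.orthogonal E))
    (hFiso : ∀ u ∈ F, ∀ w ∈ F, B u w = 0) :
    ∃! T : E →ₗ[R] V, (∀ e e' : E, B (T e) (T e') = -B e e') ∧
      (∀ e : E, ∀ e' ∈ E, B (T e) e' = 0) ∧ (F : Set V) = {x | ∃ e : E, x = e + T e} := by
  obtain ⟨T, ⟨hTQ, hTF⟩, hT_unique⟩ := Submodule.existsUnique_graph_of_isCompl hE hF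
  have hgraph (e : E) : (e : V) + T e ∈ F := by rw [← SetLike.mem_coe, hTF]; exact ⟨e, rfl⟩
  refine ⟨T, ⟨fun e e' => ?_, fun e => (hB.mem_orthogonal_iff_left).mp (hTQ e), hTF⟩, ?_⟩
  · exact hB.apply_eq_neg_of_apply_add_eq_zero e.2 e'.2 (hTQ e) (hTQ e')
      (hFiso _ (hgraph e) _ (hgraph e'))
  · rintro T' ⟨-, hT'Q, hT'F⟩
    exact hT_unique T' ⟨fun e => hB.mem_orthogonal_iff_left.mpr (hT'Q e), hT'F⟩

end LinearMap.BilinForm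

noncomputable def bformBilin (n : ℕ) : BilinForm ℝ (Fin (n + 3) → ℝ) :=
  LinearMap.mk₂ ℝ (bform n)
    (fun _ _ _ => by simp only [bform, Pi.add_apply, mul_add, add_mul, Finset.sum_add_distrib])
    (fun _ _ _ => by
      simp only [bform, Pi.smul_apply, smul_eq_mul, Finset.mul_sum]
      exact Finset.sum_congr rfl fun _ _ => by ring)
    (fun _ _ _ => by simp only [bform, Pi.add_apply, mul_add, Finset.sum_add_distrib])
    (fun _ _ _ => by
      simp only [bform, Pi.smul_apply, smul_eq_mul, Finset.mul_sum]
      exact Finset.sum_congr rfl fun _ _ => by ring)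

@[simp]
theorem bformBilin_apply (n : ℕ) (x y : Fin (n + 3) → ℝ) : bformBilin n x y = bform n x y := rfl

theorem bformBilin_isSymm (n : ℕ) : (bformBilin n).IsSymm :=
  ⟨fun x y => by simp only [bformBilin_apply, bform, mul_comm (x _)]⟩

theorem eq_zero_of_bform_self_nonneg {n : ℕ} {v : Fin (n + 3) → ℝ}
    (hv : ∀ i : Fin (n + 3), (i : ℕ) < 2 → v i = 0) (h : 0 ≤ bform n v v) : v = 0 := by
  have hsum : bform n v v = -∑ i, v i ^ 2 := by
    rw [bform, ← Finset.sum_neg_distrib]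
    refine Finset.sum_congr rfl fun i _ => ?_
    split_ifs with hi
    · simp [hv i hi]
    · ring
  have hsq : ∑ i, v i ^ 2 = 0 :=
    le_antisymm (by linarith) (Finset.sum_nonneg fun i _ => sq_nonneg (v i))
  funext i
  exact pow_eq_zero_iff two_ne_zero |>.mp <|
    (Finset.sum_eq_zero_iff_of_nonneg fun i _ => sq_nonneg (v i)).mp hsq i (Finset.mem_univ i)

theorem finrank_le_two_of_bform_self_nonneg {n : ℕ} (W : Submodule ℝ (Fin (n + 3) → ℝ))
    (hW : ∀ w ∈ W, 0 ≤ bform n w w) : finrank ℝ W ≤ 2 := by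
  let q : (Fin (n + 3) → ℝ) →ₗ[ℝ] (Fin 2 → ℝ) := LinearMap.funLeft ℝ ℝ (Fin.castLE (by omega))
  have hinj : Function.Injective (q ∘ₗ W.subtype) := by
    rw [← LinearMap.ker_eq_bot, Submodule.eq_bot_iff]
    intro w hw
    refine Subtype.ext <| eq_zero_of_bform_self_nonneg (fun i hi => ?_) (hW w w.2)
    simpa [q] using congrFun hw ⟨i, hi⟩
  simpa using LinearMap.finrank_le_finrank_of_injective hinj

section PositivePlane

variable {n : ℕ} {E : Submodule ℝ (Fin (n + 3) → ℝ)} (hEpos : ∀ u ∈ E, u ≠ 0 → 0 < bform n u u)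
include hEpos

theorem bform_self_nonneg_of_pos {u : Fin (n + 3) → ℝ} (hu : u ∈ E) : 0 ≤ bform n u u := by
  rcases eq_or_ne u 0 with rfl | hu0
  · simp [bform]
  · exact (hEpos u hu hu0).le

theorem isCompl_orthogonal_of_pos : IsCompl E ((bformBilin n).orthogonal E) := by
  refine ((bformBilin n).isCompl_orthogonal_iff_disjoint (bformBilin_isSymm n).isRefl).mpr ?_
  refine Submodule.disjoint_def.mpr fun u huE huQ => ?_
  by_contra hu0
  exact (hEpos u huE hu0).ne' (huQ u huE)

/-- `E^⊥` is negative definite: otherwise `E ⊕ ℝ v` would be a positive semidefinite 3-space. -/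
theorem eq_zero_of_mem_orthogonal_of_pos (hE2 : finrank ℝ E = 2) {v : Fin (n + 3) → ℝ}
    (hv : v ∈ (bformBilin n).orthogonal E) (hvv : 0 ≤ bform n v v) : v = 0 := by
  by_contra hv0
  have hvE : v ∉ E := fun hvE => (hEpos v hvE hv0).ne' (hv v hvE)
  have hW : ∀ w ∈ E ⊔ ℝ ∙ v, 0 ≤ bform n w w := by
    intro w hw
    obtain ⟨e, he, _, htv, rfl⟩ := Submodule.mem_sup.mp hw
    obtain ⟨t, rfl⟩ := Submodule.mem_span_singleton.mp htv
    have hev : bformBilin n e v = 0 := hv e he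
    have hve : bformBilin n v e = 0 := (bformBilin_isSymm n).isRefl _ _ hev
    have hexp : bform n (e + t • v) (e + t • v) = bform n e e + t ^ 2 * bform n v v := by
      rw [← bformBilin_apply]
      simp only [map_add, map_smul, LinearMap.add_apply, LinearMap.smul_apply, hev, hve,
        bformBilin_apply, smul_eq_mul]
      ring
    rw [hexp]
    exact add_nonneg (bform_self_nonneg_of_pos hEpos he) (mul_nonneg (sq_nonneg t) hvv)
  have hlt := Submodule.finrank_lt_finrank_of_lt (Submodule.lt_sup_iff_notMem.mpr hvE)
  have := finrank_le_two_of_bform_self_nonneg _ hW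
  omega

end PositivePlane

/-- Let `E` be a positive definite 2-plane of `ℝ^{2,n+1}` and `F` a photon (2-dimensional
totally isotropic subspace).  Then the orthogonal projection `π_E` (characterized by
`π_E(x) ∈ E` and `x - π_E(x) ⊥ E`) restricts to a linear isomorphism `F → E`:
every `x ∈ F` has a unique projection, and every `e ∈ E` is the projection of a unique
`x ∈ F`.  Consequently `F` is the graph of a unique linear map `T : E → E^⊥` which is an
isometric embedding of `(E, ⟨·,·⟩|_E)` into `(E^⊥, -⟨·,·⟩|_{E^⊥})`. -/
theorem stmt19 (n : ℕ) (E F : Submodule ℝ (Fin (n + 3) → ℝ))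
    (hE2 : Module.finrank ℝ E = 2)
    (hEpos : ∀ u ∈ E, u ≠ 0 → 0 < bform n u u)
    (hF2 : Module.finrank ℝ F = 2)
    (hFiso : ∀ u ∈ F, ∀ w ∈ F, bform n u w = 0) :
    (∀ x ∈ F, ∃! e, e ∈ E ∧ ∀ e' ∈ E, bform n (x - e) e' = 0) ∧
    (∀ e ∈ E, ∃! x, x ∈ F ∧ ∀ e' ∈ E, bform n (x - e) e' = 0) ∧
    (∃! T : E →ₗ[ℝ] (Fin (n + 3) → ℝ),
      (∀ e e' : E, bform n (T e) (T e') =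
        -(bform n (e : Fin (n + 3) → ℝ) (e' : Fin (n + 3) → ℝ))) ∧
      (∀ e : E, ∀ e' ∈ E, bform n (T e) e' = 0) ∧
      (F : Set (Fin (n + 3) → ℝ)) =
        {x | ∃ e : E, x = (e : Fin (n + 3) → ℝ) + T e}) := by
  have hB := (bformBilin_isSymm n).isRefl
  have hE := isCompl_orthogonal_of_pos hEpos
  have hF : IsCompl F ((bformBilin n).orthogonal E) :=
    hE.isCompl_of_finrank_eq (hF2.trans hE2.symm) <| Submodule.disjoint_def.mpr fun x hxF hxQ =>
      eq_zero_of_mem_orthogonal_of_pos hEpos hE2 hxQ (hFiso x hxF x hxF).ge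
  refine ⟨fun x _ => ?_, fun e _ => ?_,
    (bformBilin n).existsUnique_isometry_graph_of_isCompl hB hE hF hFiso⟩
  · simpa only [hB.mem_orthogonal_iff_left, bformBilin_apply] using
      Submodule.existsUnique_mem_sub_mem_of_isCompl hE x
  · refine (existsUnique_congr fun x => and_congr_right' ?_).mp
      (Submodule.existsUnique_mem_sub_mem_of_isCompl hF e)
    rw [sub_mem_comm_iff, hB.mem_orthogonal_iff_left]
    rfl
end
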